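/- Let P be a partial order on {1,…,n} and w a weight on 𝔽_q, with associated weighted poset distance d_{(P,w)} on 𝔽_q^n. Then diam_{d_{(P,w)}}(B_{(P,w)}(x, D)) = D for every x ∈ 𝔽_q^n and every D in the image of ϖ_{(P,w)} if and only if P is a total (chain) order on {1,…,n} and w is non-archimedean (equivalently, d_{(P,w)} is a weighted chain distance which is an ultrametric). -/

import Mathlib

set_option linter.unusedSectionVars false

open scoped Classical

noncomputable section

variable {F : Type*} [Field F] [Fintype F]

def IsWeight (w : F → ℕ) : Prop :=
  (∀ a : F, w a = 0 ↔ a = 0) ∧ (∀ a : F, w (-a) = w a) ∧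
    (∀ a b : F, w (a + b) ≤ w a + w b)

def Mw (w : F → ℕ) : ℕ := Finset.univ.sup w

def mw (w : F → ℕ) : ℕ := sInf {s | ∃ a : F, a ≠ 0 ∧ w a = s}

def rho {n : ℕ} (u : Fin n → F) : ℕ :=
  (Finset.univ.filter fun j => u j ≠ 0).sup fun j => (j : ℕ) + 1

lemma rho_le {n : ℕ} (u : Fin n → F) : rho u ≤ n :=
  Finset.sup_le fun j _ => j.isLt

def chainWeight {n : ℕ} (w : F → ℕ) (u : Fin n → F) : ℕ :=
  if h : rho u = 0 then 0
  else w (u ⟨rho u - 1,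
        lt_of_lt_of_le (Nat.sub_lt (Nat.pos_of_ne_zero h) Nat.one_pos) (rho_le u)⟩)
      + (rho u - 1) * Mw w

def dChain {n : ℕ} (w : F → ℕ) (u v : Fin n → F) : ℕ := chainWeight w (u - v)

def ballW {n : ℕ} (w : F → ℕ) (x : Fin n → F) (r : ℕ) : Finset (Fin n → F) :=
  Finset.univ.filter fun v => dChain w x v ≤ r

def diamW {n : ℕ} (w : F → ℕ) (A : Finset (Fin n → F)) : ℕ :=
  (A ×ˢ A).sup fun p => dChain w p.1 p.2

def AstarW (w : F → ℕ) (n D : ℕ) : ℕ :=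
  Finset.univ.sup fun A : Finset (Fin n → F) => if diamW w A ≤ D then A.card else 0

def winv (w : F → ℕ) (S : ℕ) : Finset F :=
  Finset.univ.filter fun a => a ≠ 0 ∧ w a ≤ S

def dP {n : ℕ} (C : Finset (Fin n → F)) : ℕ :=
  sInf {s | ∃ x ∈ C, ∃ y ∈ C, x ≠ y ∧ rho (x - y) = s}

def dW {n : ℕ} (w : F → ℕ) (C : Finset (Fin n → F)) : ℕ :=
  sInf {s | ∃ x ∈ C, ∃ y ∈ C, x ≠ y ∧ dChain w x y = s}

def floorW (w : F → ℕ) (n D : ℕ) : ℕ :=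
  (Finset.univ.filter fun u : Fin n → F => chainWeight w u < D).sup (chainWeight w)

def nonArch (w : F → ℕ) : Prop := ∀ a b : F, w (a + b) ≤ max (w a) (w b)

def Sw (w : F → ℕ) : ℕ :=
  if nonArch w then Mw w
  else sInf {s | ∃ a b : F, max (w a) (w b) < w (a - b) ∧ max (w a) (w b) = s}

def WwCond (w : F → ℕ) (S : ℕ) (K : Finset F) : Prop :=
  (∀ a ∈ K, Sw w ≤ w a ∧ w a ≤ S) ∧
  (∀ a ∈ K, ∀ b : F, w b ≤ Sw w - 1 → w (a - b) ≤ S) ∧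
  (∀ a ∈ K, ∀ b ∈ K, w (a - b) ≤ S)

def WwCard (w : F → ℕ) (S : ℕ) : ℕ :=
  Finset.univ.sup fun K : Finset F => if WwCond w S K then K.card else 0

def idealOf {n : ℕ} (P : PartialOrder (Fin n)) (u : Fin n → F) : Finset (Fin n) :=
  Finset.univ.filter fun j => ∃ i : Fin n, u i ≠ 0 ∧ P.le j i

def maxOf {n : ℕ} (P : PartialOrder (Fin n)) (u : Fin n → F) : Finset (Fin n) :=
  (idealOf P u).filter fun j => ∀ k ∈ idealOf P u, P.le j k → j = k

def posetWeight {n : ℕ} (P : PartialOrder (Fin n)) (w : F → ℕ) (u : Fin n → F) : ℕ :=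
  (∑ i ∈ maxOf P u, w (u i)) + Mw w * ((idealOf P u) \ (maxOf P u)).card

def dPoset {n : ℕ} (P : PartialOrder (Fin n)) (w : F → ℕ) (u v : Fin n → F) : ℕ :=
  posetWeight P w (u - v)

def ballP {n : ℕ} (P : PartialOrder (Fin n)) (w : F → ℕ) (x : Fin n → F) (r : ℕ) :
    Finset (Fin n → F) :=
  Finset.univ.filter fun v => dPoset P w x v ≤ r

def diamP {n : ℕ} (P : PartialOrder (Fin n)) (w : F → ℕ) (A : Finset (Fin n → F)) : ℕ :=
  (A ×ˢ A).sup fun p => dPoset P w p.1 p.2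

end

/-!
The condition on balls says exactly that the weighted poset weight `ϖ` is ultrametric,
`ϖ (u + v) ≤ max (ϖ u) (ϖ v)`: take the ball of radius `max (ϖ u) (ϖ v)` around `0`,
which contains `u` and `-v`. On a chain the ideal of `u ≠ 0` is the principal ideal of the
top `r` of its support, so `ϖ u = w (u r) + M_w (|↓r| - 1)`; the `M_w`-term dominates
whenever the tops differ, and when they agree the claim reduces to `w` being
non-archimedean. Conversely, two incomparable `i, j` give `ϖ (e_i + e_j) > ϖ e_i, ϖ e_j`,
and on a single coordinate `ϖ (a e_i) = w a + const`, so `w` itself must be non-archimedean.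
-/

open Finset

section

variable {F : Type*} [Field F] [Fintype F] {n : ℕ} {P : PartialOrder (Fin n)} {w : F → ℕ}

def IsUltrametric (P : PartialOrder (Fin n)) (w : F → ℕ) : Prop :=
  ∀ u v : Fin n → F, posetWeight P w (u + v) ≤ max (posetWeight P w u) (posetWeight P w v)

lemma IsWeight.map_zero (hw : IsWeight w) : w 0 = 0 := (hw.1 0).2 rfl

lemma IsWeight.pos (hw : IsWeight w) {a : F} (ha : a ≠ 0) : 0 < w a :=
  Nat.pos_of_ne_zero fun h => ha ((hw.1 a).1 h)

lemma le_Mw (w : F → ℕ) (a : F) : w a ≤ Mw w := le_sup (mem_univ a)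

noncomputable def principalIdeal (P : PartialOrder (Fin n)) (i : Fin n) : Finset (Fin n) :=
  univ.filter fun j => P.le j i

@[simp]
lemma mem_principalIdeal {i j : Fin n} : j ∈ principalIdeal P i ↔ P.le j i := by
  simp [principalIdeal]

lemma self_mem_principalIdeal (i : Fin n) : i ∈ principalIdeal P i :=
  mem_principalIdeal.2 (P.le_refl i)

lemma one_le_card_principalIdeal (i : Fin n) : 1 ≤ (principalIdeal P i).card :=
  card_pos.2 ⟨i, self_mem_principalIdeal i⟩

lemma card_principalIdeal_lt {i j : Fin n} (hij : P.le i j) (hne : i ≠ j) :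
    (principalIdeal P i).card < (principalIdeal P j).card := by
  refine card_lt_card ((ssubset_iff_of_subset fun k hk => ?_).2 ⟨j, ?_, ?_⟩)
  · exact mem_principalIdeal.2 (P.le_trans _ _ _ (mem_principalIdeal.1 hk) hij)
  · exact self_mem_principalIdeal j
  · exact fun h => hne (P.le_antisymm _ _ hij (mem_principalIdeal.1 h))

@[simp]
lemma mem_idealOf {u : Fin n → F} {j : Fin n} :
    j ∈ idealOf P u ↔ ∃ i, u i ≠ 0 ∧ P.le j i := by
  simp [idealOf]

lemma mem_maxOf {u : Fin n → F} {i : Fin n} :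
    i ∈ maxOf P u ↔ i ∈ idealOf P u ∧ ∀ k ∈ idealOf P u, P.le i k → i = k :=
  mem_filter

lemma posetWeight_zero (P : PartialOrder (Fin n)) (w : F → ℕ) :
    posetWeight P w (0 : Fin n → F) = 0 := by
  have hI : idealOf P (0 : Fin n → F) = ∅ := by ext; simp
  simp [posetWeight, maxOf, hI]

lemma posetWeight_neg (hw : IsWeight w) (u : Fin n → F) :
    posetWeight P w (-u) = posetWeight P w u := by
  have hI : idealOf P (-u) = idealOf P u := by ext; simp
  simp only [posetWeight, maxOf, hI, Pi.neg_apply, hw.2.1]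

lemma posetWeight_of_idealOf_eq {u : Fin n → F} {i : Fin n}
    (h : idealOf P u = principalIdeal P i) :
    posetWeight P w u = w (u i) + Mw w * ((principalIdeal P i).card - 1) := by
  have hmax : maxOf P u = {i} := by
    ext j
    simp only [mem_maxOf, h, mem_principalIdeal, mem_singleton]
    refine ⟨fun hj => hj.2 i (P.le_refl i) hj.1, ?_⟩
    rintro rfl
    exact ⟨P.le_refl j, fun k hk hjk => P.le_antisymm _ _ hjk hk⟩
  rw [posetWeight, hmax, h, sum_singleton,
    card_sdiff_of_subset (singleton_subset_iff.2 (self_mem_principalIdeal i)), card_singleton]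

lemma posetWeight_single {i : Fin n} {a : F} (ha : a ≠ 0) :
    posetWeight P w (Pi.single i a) = w a + Mw w * ((principalIdeal P i).card - 1) := by
  have hI : idealOf P (Pi.single i a) = principalIdeal P i := by
    ext j
    simp only [mem_idealOf, mem_principalIdeal]
    refine ⟨?_, fun hj => ⟨i, by simpa using ha, hj⟩⟩
    rintro ⟨k, hk, hjk⟩
    obtain rfl : k = i := by_contra fun hki => hk (Pi.single_eq_of_ne (M := fun _ => F) hki a)
    exact hjk
  rw [posetWeight_of_idealOf_eq hI, Pi.single_eq_same]

/-- The points strictly below a maximal point `i` of the ideal are non-maximal points of it. -/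
lemma sum_add_le_posetWeight_of_mem_maxOf {u : Fin n → F} {i : Fin n} (hi : i ∈ maxOf P u) :
    (∑ k ∈ maxOf P u, w (u k)) + Mw w * ((principalIdeal P i).card - 1) ≤
      posetWeight P w u := by
  obtain ⟨hiI, himax⟩ := mem_maxOf.1 hi
  refine Nat.add_le_add_left (Nat.mul_le_mul_left _ ?_) _
  rw [← card_erase_of_mem (self_mem_principalIdeal i)]
  refine card_le_card fun k hk => ?_
  obtain ⟨hki, hk⟩ := mem_erase.1 hk
  have hkI : k ∈ idealOf P u := by
    obtain ⟨l, hl, hil⟩ := mem_idealOf.1 hiI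
    exact mem_idealOf.2 ⟨l, hl, P.le_trans _ _ _ (mem_principalIdeal.1 hk) hil⟩
  refine mem_sdiff.2 ⟨hkI, fun hkmax => hki ?_⟩
  exact (mem_maxOf.1 hkmax).2 i hiI (mem_principalIdeal.1 hk)

lemma mem_maxOf_of_support {u : Fin n → F} {i j : Fin n} (hij : ¬ P.le i j) (hi : u i ≠ 0)
    (hsupp : ∀ l, u l ≠ 0 → l = i ∨ l = j) : i ∈ maxOf P u := by
  refine mem_maxOf.2 ⟨mem_idealOf.2 ⟨i, hi, P.le_refl i⟩, fun k hk hik => ?_⟩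
  obtain ⟨l, hl, hkl⟩ := mem_idealOf.1 hk
  rcases hsupp l hl with rfl | rfl
  · exact P.le_antisymm _ _ hik hkl
  · exact absurd (P.le_trans _ _ _ hik hkl) hij

section Chain

variable (htot : ∀ i j : Fin n, P.le i j ∨ P.le j i)
include htot

lemma exists_idealOf_eq_principalIdeal {u : Fin n → F} (hu : u ≠ 0) :
    ∃ r, u r ≠ 0 ∧ idealOf P u = principalIdeal P r := by
  obtain ⟨r, hr, hrmax⟩ := exists_max_image (univ.filter fun j => u j ≠ 0)
    (fun j => (principalIdeal P j).card) (by simpa [Finset.Nonempty, funext_iff] using hu)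
  have hr : u r ≠ 0 := (mem_filter.1 hr).2
  have htop : ∀ l, u l ≠ 0 → P.le l r := by
    intro l hl
    rcases eq_or_ne l r with rfl | hlr
    · exact P.le_refl l
    refine (htot l r).resolve_right fun hrl => ?_
    exact (card_principalIdeal_lt hrl hlr.symm).not_ge (hrmax l (by simpa using hl))
  refine ⟨r, hr, ext fun j => ?_⟩
  simp only [mem_idealOf, mem_principalIdeal]
  exact ⟨fun ⟨l, hl, hjl⟩ => P.le_trans _ _ _ hjl (htop l hl), fun hjr => ⟨r, hr, hjr⟩⟩

lemma le_posetWeight_of_ne_zero {u : Fin n → F} {k : Fin n} (hk : u k ≠ 0) :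
    w (u k) + Mw w * ((principalIdeal P k).card - 1) ≤ posetWeight P w u := by
  obtain ⟨r, -, hI⟩ := exists_idealOf_eq_principalIdeal htot fun h => hk (congrFun h k)
  have hkr : P.le k r := by
    have hkI : k ∈ idealOf P u := mem_idealOf.2 ⟨k, hk, P.le_refl k⟩
    rwa [hI, mem_principalIdeal] at hkI
  rw [posetWeight_of_idealOf_eq hI]
  rcases eq_or_ne k r with rfl | hne
  · rfl
  have hcard := card_principalIdeal_lt hkr hne
  have h1 := one_le_card_principalIdeal (P := P) k
  calc w (u k) + Mw w * ((principalIdeal P k).card - 1)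
      ≤ Mw w + Mw w * ((principalIdeal P k).card - 1) := by gcongr; exact le_Mw w _
    _ = Mw w * (principalIdeal P k).card := by
        rw [add_comm, ← mul_add_one, Nat.sub_add_cancel h1]
    _ ≤ Mw w * ((principalIdeal P r).card - 1) := by gcongr; omega
    _ ≤ _ := Nat.le_add_left _ _

lemma isUltrametric_of_nonArch (hw : IsWeight w) (hna : nonArch w) : IsUltrametric P w := by
  intro s t
  rcases eq_or_ne (s + t) 0 with h | h
  · simp [h, posetWeight_zero]
  obtain ⟨r, hr, hI⟩ := exists_idealOf_eq_principalIdeal htot h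
  have key : ∀ x y : Fin n → F, x + y = s + t → w (y r) ≤ w (x r) →
      posetWeight P w (s + t) ≤ posetWeight P w x := by
    intro x y hxy hyx
    have hx : x r ≠ 0 := by
      intro hx
      rw [hx, hw.map_zero, Nat.le_zero, hw.1] at hyx
      exact hr (by rw [← hxy, Pi.add_apply, hx, hyx, add_zero])
    calc posetWeight P w (s + t)
        = w (x r + y r) + Mw w * ((principalIdeal P r).card - 1) := by
          rw [posetWeight_of_idealOf_eq hI, ← hxy, Pi.add_apply]
      _ ≤ w (x r) + Mw w * ((principalIdeal P r).card - 1) := by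
          gcongr; exact (hna _ _).trans (max_le le_rfl hyx)
      _ ≤ posetWeight P w x := le_posetWeight_of_ne_zero htot hx
  rcases le_total (w (t r)) (w (s r)) with hts | hst
  · exact (key s t rfl hts).trans (le_max_left _ _)
  · exact (key t s (add_comm t s) hst).trans (le_max_right _ _)

end Chain

lemma posetWeight_single_lt_add_single (hw : IsWeight w) {i j : Fin n}
    (hij : ¬ P.le i j) (hji : ¬ P.le j i) :
    posetWeight P w (Pi.single i (1 : F)) <
      posetWeight P w (Pi.single i (1 : F) + Pi.single j 1) := by
  have hne : i ≠ j := fun h => hij (h ▸ P.le_refl i)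
  set u : Fin n → F := Pi.single i 1 + Pi.single j 1
  have hui : u i = 1 := by simp [u, hne]
  have huj : u j = 1 := by simp [u, hne.symm]
  have hsupp : ∀ l, u l ≠ 0 → l = i ∨ l = j := by
    intro l hl
    by_contra! h
    simp [u, h.1, h.2] at hl
  have hi : i ∈ maxOf P u := mem_maxOf_of_support hij (by simp [hui]) hsupp
  have hj : j ∈ maxOf P u :=
    mem_maxOf_of_support hji (by simp [huj]) fun l hl => (hsupp l hl).symm
  have hsum : w 1 + w 1 ≤ ∑ k ∈ maxOf P u, w (u k) := by
    calc w 1 + w 1 = ∑ k ∈ {i, j}, w (u k) := by rw [sum_pair hne, hui, huj]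
      _ ≤ _ := sum_le_sum_of_subset (insert_subset hi (singleton_subset_iff.2 hj))
  rw [posetWeight_single one_ne_zero]
  calc w 1 + Mw w * ((principalIdeal P i).card - 1)
      < w 1 + w 1 + Mw w * ((principalIdeal P i).card - 1) := by
        gcongr; exact Nat.lt_add_of_pos_right (hw.pos one_ne_zero)
    _ ≤ (∑ k ∈ maxOf P u, w (u k)) + Mw w * ((principalIdeal P i).card - 1) := by gcongr
    _ ≤ posetWeight P w u := sum_add_le_posetWeight_of_mem_maxOf hi

lemma total_of_isUltrametric (hw : IsWeight w) (h : IsUltrametric P w) (i j : Fin n) :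
    P.le i j ∨ P.le j i := by
  by_contra! hij
  have hi := posetWeight_single_lt_add_single (F := F) hw hij.1 hij.2
  have hj := posetWeight_single_lt_add_single (F := F) hw hij.2 hij.1
  rw [add_comm] at hj
  exact (h _ _).not_gt (max_lt hi hj)

lemma nonArch_of_isUltrametric (hw : IsWeight w) (i : Fin n) (h : IsUltrametric P w) :
    nonArch w := by
  intro a b
  rcases eq_or_ne a 0 with rfl | ha
  · simp
  rcases eq_or_ne b 0 with rfl | hb
  · simp
  rcases eq_or_ne (a + b) 0 with hab | hab
  · simp [hab, hw.map_zero]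
  have := h (Pi.single i a) (Pi.single i b)
  rw [← Pi.single_add, posetWeight_single ha, posetWeight_single hb, posetWeight_single hab,
    max_add_add_right] at this
  omega

lemma mem_ballP {x v : Fin n → F} {r : ℕ} :
    v ∈ ballP P w x r ↔ posetWeight P w (x - v) ≤ r := by
  rw [ballP, mem_filter]
  exact and_iff_right (mem_univ v)

lemma posetWeight_sub_le_diamP {A : Finset (Fin n → F)} {u v : Fin n → F} (hu : u ∈ A)
    (hv : v ∈ A) : posetWeight P w (u - v) ≤ diamP P w A :=
  Finset.le_sup (f := fun p : (Fin n → F) × (Fin n → F) => dPoset P w p.1 p.2) (b := (u, v))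
    (mem_product.2 ⟨hu, hv⟩)

lemma diamP_ballP_eq_iff_isUltrametric (hw : IsWeight w) :
    (∀ x : Fin n → F, ∀ D : ℕ, (∃ y : Fin n → F, posetWeight P w y = D) →
      diamP P w (ballP P w x D) = D) ↔
    IsUltrametric P w := by
  constructor
  · intro H u v
    obtain ⟨y, hy⟩ : ∃ y, posetWeight P w y = max (posetWeight P w u) (posetWeight P w v) :=
      (max_choice _ _).elim (fun h => ⟨u, h.symm⟩) (fun h => ⟨v, h.symm⟩)
    rw [← H 0 _ ⟨y, hy⟩, ← sub_neg_eq_add]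
    refine posetWeight_sub_le_diamP (mem_ballP.2 ?_) (mem_ballP.2 ?_)
    · rw [zero_sub, posetWeight_neg hw]; exact le_max_left _ _
    · rw [zero_sub, neg_neg]; exact le_max_right _ _
  · intro H x D ⟨y, hy⟩
    refine le_antisymm (Finset.sup_le fun p hp => ?_) ?_
    · obtain ⟨hu, hv⟩ := mem_product.1 hp
      calc posetWeight P w (p.1 - p.2) = posetWeight P w ((x - p.2) + -(x - p.1)) := by
            congr 1; abel
        _ ≤ D := (H _ _).trans (max_le (mem_ballP.1 hv) ((posetWeight_neg hw _).trans_le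
            (mem_ballP.1 hu)))
    · have hx : x ∈ ballP P w x D := mem_ballP.2 (by simp [posetWeight_zero])
      have hxy : x - y ∈ ballP P w x D := mem_ballP.2 (by rw [sub_sub_cancel, hy])
      calc D = posetWeight P w (x - (x - y)) := by rw [sub_sub_cancel, hy]
        _ ≤ _ := posetWeight_sub_le_diamP hx hxy

end

theorem stmt19 {F : Type*} [Field F] [Fintype F] {n : ℕ} (hn : 1 ≤ n)
    (w : F → ℕ) (hw : IsWeight w) (P : PartialOrder (Fin n)) :
    (∀ x : Fin n → F, ∀ D : ℕ, (∃ y : Fin n → F, posetWeight P w y = D) →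
      diamP P w (ballP P w x D) = D) ↔
    ((∀ i j : Fin n, P.le i j ∨ P.le j i) ∧
      ∀ a b : F, w (a + b) ≤ max (w a) (w b)) := by
  rw [diamP_ballP_eq_iff_isUltrametric hw]
  exact ⟨fun h => ⟨total_of_isUltrametric hw h, nonArch_of_isUltrametric hw ⟨0, hn⟩ h⟩,
    fun ⟨htot, hna⟩ => isUltrametric_of_nonArch htot hw hna⟩
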